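/- Let n ≥ 3, let R > 0, and let θ : Fin n → ℝ be antitone (i ≤ j implies θ i ≥ θ j) with θ 0 = π and θ (n−1) = 0. Define the polygon vertices A i = P_R(θ i) for i : Fin n, so A₀ = (−R, 0), A_{n−1} = (R, 0), and all vertices lie on the upper semicircle with the side A₀A_{n−1} as diameter. Then (dist A₀ A_{n−1})² = Σ_{k=0}^{n−2} (dist A_k A_{k+1})² + 2 · Σ_{k=0}^{n−4} (dist A₀ A_{k+1}) · (dist A_{k+1} A_{k+2}) · (dist A_{k+2} A_{n−1}) / (dist A₀ A_{n−1}). -/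

import Mathlib

noncomputable def P (R θ : ℝ) : EuclideanSpace ℝ (Fin 2) :=
  (WithLp.equiv 2 (Fin 2 → ℝ)).symm ![R * Real.cos θ, R * Real.sin θ]

open Real Finset

/-! Put `D := dist (A 0) (A (n - 1))` and `s k := dist (A k) (A (n - 1))`. By Thales,
`dist (A 0) (A 1) ^ 2 = D ^ 2 - s 1 ^ 2`, and the last side is `s (n - 2)`. Every side in between
satisfies `s k ^ 2 - s (k + 1) ^ 2 = dist (A k) (A (k + 1)) ^ 2 + 2 * dist (A 0) (A k) *
dist (A k) (A (k + 1)) * s (k + 1) / D`: this is the law of cosines in the triangle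
`A k, A (k + 1), A (n - 1)`, whose angle at `A (k + 1)` is supplementary to the inscribed angle
at `A 0`, of cosine `dist (A 0) (A k) / D`. Summing, the middle terms telescope. -/

lemma dist_P_sq (R α β : ℝ) :
    dist (P R α) (P R β) ^ 2 = (R * cos α - R * cos β) ^ 2 + (R * sin α - R * sin β) ^ 2 := by
  rw [EuclideanSpace.dist_eq, sq_sqrt (by positivity)]
  simp [P, Fin.sum_univ_two, Real.dist_eq, sq_abs]

lemma dist_P_pi_sq_add_dist_P_zero_sq (R α : ℝ) :
    dist (P R π) (P R α) ^ 2 + dist (P R α) (P R 0) ^ 2 = dist (P R π) (P R 0) ^ 2 := by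
  simp only [dist_P_sq, cos_pi, sin_pi, cos_zero, sin_zero]
  linear_combination 2 * R ^ 2 * sin_sq_add_cos_sq α

lemma dist_P_of_le {R α β : ℝ} (hR : 0 ≤ R) (hβα : β ≤ α) (hαβ : α ≤ β + 2 * π) :
    dist (P R α) (P R β) = 2 * R * sin ((α - β) / 2) := by
  have hsin : 0 ≤ sin ((α - β) / 2) := sin_nonneg_of_nonneg_of_le_pi (by linarith) (by linarith)
  refine (pow_left_inj₀ dist_nonneg (by positivity) two_ne_zero).1 ?_
  rw [dist_P_sq, ← mul_sub, ← mul_sub, cos_sub_cos, sin_sub_sin]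
  linear_combination 4 * R ^ 2 * sin ((α - β) / 2) ^ 2 * sin_sq_add_cos_sq ((α + β) / 2)

lemma dist_P_zero_sq_sub_dist_P_zero_sq {R α β : ℝ} (hR : 0 < R) (hβ : 0 ≤ β) (hβα : β ≤ α)
    (hα : α ≤ π) :
    dist (P R α) (P R 0) ^ 2 - dist (P R β) (P R 0) ^ 2 =
      dist (P R α) (P R β) ^ 2 + 2 * (dist (P R π) (P R α) * dist (P R α) (P R β) *
        dist (P R β) (P R 0) / dist (P R π) (P R 0)) := by
  have hpi := pi_pos
  rw [dist_P_of_le hR.le hβα (by linarith), dist_P_of_le hR.le (hβ.trans hβα) (by linarith),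
    dist_P_of_le hR.le hβ (by linarith), dist_P_of_le hR.le hα (by linarith),
    dist_P_of_le hR.le hpi.le (by linarith), sub_zero, sub_zero, sub_zero, sin_pi_div_two,
    show (π - α) / 2 = π / 2 - α / 2 by ring, sin_pi_div_two_sub,
    show (α - β) / 2 = α / 2 - β / 2 by ring, sin_sub]
  field_simp
  linear_combination sin (β / 2) ^ 2 * sin_sq_add_cos_sq (α / 2) -
    sin (α / 2) ^ 2 * sin_sq_add_cos_sq (β / 2)

theorem polygon_pythagoras (n : ℕ) (hn : 3 ≤ n) (R : ℝ) (hR : 0 < R)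
    (θ : ℕ → ℝ)
    (hanti : ∀ i j, i ≤ j → j < n → θ j ≤ θ i)
    (h0 : θ 0 = Real.pi) (hlast : θ (n - 1) = 0)
    (A : ℕ → EuclideanSpace ℝ (Fin 2)) (hA : ∀ i, A i = P R (θ i)) :
    (dist (A 0) (A (n - 1))) ^ 2 =
      (∑ k ∈ Finset.range (n - 1), (dist (A k) (A (k + 1))) ^ 2) +
        2 * ∑ k ∈ Finset.range (n - 3),
          dist (A 0) (A (k + 1)) * dist (A (k + 1)) (A (k + 2)) *
            dist (A (k + 2)) (A (n - 1)) / dist (A 0) (A (n - 1)) := by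
  obtain ⟨m, rfl⟩ : ∃ m, n = m + 3 := ⟨n - 3, by omega⟩
  simp only [show m + 3 - 1 = m + 2 from rfl, show m + 3 - 3 = m from rfl] at hlast ⊢
  have hθ : ∀ i < m + 3, 0 ≤ θ i ∧ θ i ≤ π := fun i hi =>
    ⟨hlast ▸ hanti i (m + 2) (by omega) (by omega), h0 ▸ hanti 0 i i.zero_le hi⟩
  have hthales : dist (A 0) (A 1) ^ 2 + dist (A 1) (A (m + 2)) ^ 2 =
      dist (A 0) (A (m + 2)) ^ 2 := by
    simp only [hA, h0, hlast]
    exact dist_P_pi_sq_add_dist_P_zero_sq R (θ 1)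
  have htelescope : ∑ k ∈ range m, (dist (A (k + 1)) (A (k + 2)) ^ 2 +
      2 * (dist (A 0) (A (k + 1)) * dist (A (k + 1)) (A (k + 2)) * dist (A (k + 2)) (A (m + 2)) /
        dist (A 0) (A (m + 2)))) = dist (A 1) (A (m + 2)) ^ 2 - dist (A (m + 1)) (A (m + 2)) ^ 2 := by
    rw [← sum_range_sub' (fun k => dist (A (k + 1)) (A (m + 2)) ^ 2)]
    refine sum_congr rfl fun k hk => ?_
    have hk : k < m := mem_range.1 hk
    simp only [hA, h0, hlast]
    exact (dist_P_zero_sq_sub_dist_P_zero_sq hR (hθ (k + 2) (by omega)).1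
      (hanti (k + 1) (k + 2) (by omega) (by omega)) (hθ (k + 1) (by omega)).2).symm
  rw [sum_range_succ', sum_range_succ, mul_sum, ← hthales]
  rw [sum_add_distrib] at htelescope
  simp only [zero_add, add_assoc, Nat.reduceAdd]
  linear_combination -htelescope
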